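/- The function u : ℝ² → ℝ defined by u(x,y) = |x|^{4/3} − |y|^{4/3} is a viscosity solution of the infinity Laplace equation −Δ_∞u = −⟨D²u ∇u, ∇u⟩ = 0 on ℝ²; that is: for every C² function φ : ℝ² → ℝ and every point z₀ at which u − φ attains a local maximum, −⟨D²φ(z₀)∇φ(z₀), ∇φ(z₀)⟩ ≤ 0, and for every C² function φ and every point z₀ at which u − φ attains a local minimum, −⟨D²φ(z₀)∇φ(z₀), ∇φ(z₀)⟩ ≥ 0. -/

import Mathlib

/-!
Write `Q(t) = |t|^{4/3}`, so `u(x, y) = Q(x) - Q(y)`. Where `x ≠ 0`, `Q` is twice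
differentiable and `Q''(x) Q'(x)² = 64/81`; hence the second derivative of `u` along its own
gradient `(Q'(x), -Q'(y))` is `64/81 - Q''(y) Q'(y)² ≥ 0` (the `y`-term vanishes when `y = 0`).
At a maximum of `u - φ` the gradients of `u` and `φ` agree, and comparing second derivatives along
that common direction gives `Δ_∞φ(z₀) ≥ 0`. On the axis `x = 0` no `C²` function touches `u` from
above at all: it would have to dominate `|t|^{4/3}` by a quadratic Taylor polynomial. Swapping the
coordinates turns `u` into `-u`, so the supersolution property is the subsolution property for `-φ`.
-/

open Filter Topology
open scoped RealInnerProductSpace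

theorem isLocalMax_sub_sub_sq {f f' : ℝ → ℝ} {x₀ c k : ℝ}
    (hf : ∀ᶠ x in 𝓝 x₀, HasDerivAt f (f' x) x) (hf' : HasDerivAt f' c x₀) (hk : c < 2 * k) :
    IsLocalMax (fun x => f x - f' x₀ * (x - x₀) - k * (x - x₀) ^ 2) x₀ := by
  have hg : ∀ᶠ x in 𝓝 x₀, HasDerivAt (fun x => f x - f' x₀ * (x - x₀) - k * (x - x₀) ^ 2)
      (f' x - f' x₀ - 2 * k * (x - x₀)) x := by
    filter_upwards [hf] with x hx
    have hlin := (hasDerivAt_id' x).sub_const x₀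
    exact ((hx.sub (hlin.const_mul (f' x₀))).sub ((hlin.pow 2).const_mul k)).congr_deriv
      (by simp only [mul_one, Nat.cast_ofNat, Nat.add_one_sub_one, pow_one]; ring)
  have hg' : HasDerivAt (fun x => f' x - f' x₀ - 2 * k * (x - x₀)) (c - 2 * k) x₀ :=
    ((hf'.sub_const (f' x₀)).sub
      (((hasDerivAt_id' x₀).sub_const x₀).const_mul (2 * k))).congr_deriv (by ring)
  refine isLocalMax_of_deriv_deriv_neg ?_ ?_ hg.self_of_nhds.continuousAt
  · rw [Filter.EventuallyEq.deriv_eq (hg.mono fun x hx => hx.deriv), hg'.deriv]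
    linarith
  · simp [hg.self_of_nhds.deriv]

theorem IsLocalMax.hasDerivAt_deriv_nonpos {f f' : ℝ → ℝ} {x₀ c : ℝ} (hmax : IsLocalMax f x₀)
    (hf : ∀ᶠ x in 𝓝 x₀, HasDerivAt f (f' x) x) (hf' : HasDerivAt f' c x₀) : c ≤ 0 := by
  by_contra! hc
  have hf'x₀ : f' x₀ = 0 := hmax.hasDerivAt_eq_zero hf.self_of_nhds
  have hbound := isLocalMax_sub_sub_sq (hf.mono fun x hx => hx.neg) hf'.neg
    (k := -(c / 4)) (by linarith)
  obtain ⟨x, ⟨hxmax, hxbound⟩, hx⟩ :=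
    ((hmax.and hbound).filter_mono nhdsWithin_le_nhds |>.and
      (self_mem_nhdsWithin (s := {x₀}ᶜ))).exists
  have : 0 < (x - x₀) ^ 2 := by
    have : x - x₀ ≠ 0 := sub_ne_zero.mpr hx
    positivity
  simp only [Pi.neg_apply, hf'x₀, neg_zero, zero_mul, sub_zero, sub_self] at hxbound
  nlinarith

theorem not_eventually_abs_rpow_le_sub {ψ ψ' : ℝ → ℝ} {c p : ℝ} (hp : p < 2)
    (hψ : ∀ᶠ t in 𝓝 0, HasDerivAt ψ (ψ' t) t) (hψ' : HasDerivAt ψ' c 0) :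
    ¬ ∀ᶠ t in 𝓝 0, |t| ^ p ≤ ψ t - ψ 0 := by
  intro htouch
  obtain ⟨k, hk⟩ := exists_gt (c / 2)
  have hbound : IsLocalMax (fun t => ψ t - ψ' 0 * t - k * t ^ 2) 0 := by
    simpa only [sub_zero] using isLocalMax_sub_sub_sq hψ hψ' (k := k) (by linarith)
  have hneg : Tendsto (fun t : ℝ => -t) (𝓝 0) (𝓝 0) := by
    simpa using (continuous_neg (G := ℝ)).tendsto 0
  have hquad : ∀ᶠ t in 𝓝 0, |t| ^ p ≤ k * |t| ^ (2 : ℝ) := by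
    filter_upwards [htouch, hbound, hneg.eventually htouch, hneg.eventually hbound]
      with t h₁ h₂ h₃ h₄
    simp only [abs_neg, mul_zero, sub_zero, ne_eq, OfNat.ofNat_ne_zero, not_false_eq_true,
      zero_pow] at h₂ h₃ h₄
    rw [Real.rpow_two, sq_abs]
    nlinarith
  have hsmall : ∀ᶠ t in 𝓝 0, k * |t| ^ (2 - p) < 1 := by
    have hcont : Tendsto (fun t : ℝ => k * |t| ^ (2 - p)) (𝓝 0) (𝓝 (k * |0| ^ (2 - p))) :=
      ((continuous_abs.rpow_const fun _ => Or.inr (by linarith)).tendsto 0).const_mul k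
    rw [abs_zero, Real.zero_rpow (by linarith), mul_zero] at hcont
    exact hcont.eventually (eventually_lt_nhds one_pos)
  obtain ⟨t, ⟨h₁, h₂⟩, ht⟩ :=
    ((hquad.and hsmall).filter_mono nhdsWithin_le_nhds |>.and
      (self_mem_nhdsWithin (s := {0}ᶜ))).exists
  have htpos : 0 < |t| := abs_pos.mpr ht
  have hsplit : |t| ^ (2 : ℝ) = |t| ^ (2 - p) * |t| ^ p := by
    rw [← Real.rpow_add htpos, sub_add_cancel]
  have : 0 < |t| ^ p := Real.rpow_pos_of_pos htpos p
  rw [hsplit, ← mul_assoc] at h₁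
  nlinarith

section

variable {E : Type*} [NormedAddCommGroup E] {φ u : E → ℝ} {z v : E}

theorem hasDerivAt_add_smul [NormedSpace ℝ E] (z v : E) (t : ℝ) :
    HasDerivAt (fun s : ℝ => z + s • v) v t := by
  simpa using ((hasDerivAt_id t).smul_const v).const_add z

theorem IsLocalMax.comp_add_smul [NormedSpace ℝ E] (hmax : IsLocalMax u z) (v : E) :
    IsLocalMax (fun t : ℝ => u (z + t • v)) 0 :=
  IsLocalMax.comp_continuous (g := fun t : ℝ => z + t • v) (by simpa using hmax) (by fun_prop)

variable [InnerProductSpace ℝ E] [CompleteSpace E]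

theorem ContDiff.differentiable_gradient (hφ : ContDiff ℝ 2 φ) : Differentiable ℝ (gradient φ) :=
  (InnerProductSpace.toDual ℝ E).symm.toContinuousLinearEquiv.differentiable.comp
    ((hφ.fderiv_right (m := 1) (by norm_num)).differentiable one_ne_zero)

theorem hasDerivAt_comp_add_smul {t : ℝ} (hφ : DifferentiableAt ℝ φ (z + t • v)) :
    HasDerivAt (fun s : ℝ => φ (z + s • v)) ⟪gradient φ (z + t • v), v⟫ t := by
  rw [inner_gradient_left]
  exact hφ.hasFDerivAt.comp_hasDerivAt t (hasDerivAt_add_smul z v t)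

theorem hasDerivAt_inner_gradient_comp_add_smul (hφ : DifferentiableAt ℝ (gradient φ) z) :
    HasDerivAt (fun t : ℝ => ⟪gradient φ (z + t • v), v⟫) ⟪fderiv ℝ (gradient φ) z v, v⟫ 0 := by
  have hgrad := (show HasFDerivAt (gradient φ) (fderiv ℝ (gradient φ) z) (z + (0 : ℝ) • v) by
    simpa using hφ.hasFDerivAt).comp_hasDerivAt 0 (hasDerivAt_add_smul z v 0)
  exact hgrad.inner ℝ (hasDerivAt_const 0 v) |>.congr_deriv (by simp)

theorem IsLocalMax.eq_inner_gradient {D : ℝ} (hmax : IsLocalMax (fun y => u y - φ y) z)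
    (hφ : DifferentiableAt ℝ φ z) (hu : HasDerivAt (fun t : ℝ => u (z + t • v)) D 0) :
    D = ⟪gradient φ z, v⟫ := by
  have := (hmax.comp_add_smul v).hasDerivAt_eq_zero
    (hu.sub (hasDerivAt_comp_add_smul (t := 0) (by simpa using hφ)))
  simpa [sub_eq_zero] using this

theorem IsLocalMax.le_inner_fderiv_gradient {U : ℝ → ℝ} {d : ℝ} (hφ : ContDiff ℝ 2 φ)
    (hmax : IsLocalMax (fun y => u y - φ y) z)
    (hu : ∀ᶠ t in 𝓝 0, HasDerivAt (fun s : ℝ => u (z + s • v)) (U t) t)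
    (hU : HasDerivAt U d 0) :
    d ≤ ⟪fderiv ℝ (gradient φ) z v, v⟫ := by
  have := (hmax.comp_add_smul v).hasDerivAt_deriv_nonpos
    (hu.mono fun t ht => ht.sub (hasDerivAt_comp_add_smul (hφ.differentiable (by norm_num) _)))
    (hU.sub (hasDerivAt_inner_gradient_comp_add_smul (hφ.differentiable_gradient z)))
  linarith

noncomputable def infLaplacian (φ : E → ℝ) (z : E) : ℝ :=
  ⟪fderiv ℝ (gradient φ) z (gradient φ z), gradient φ z⟫

theorem infLaplacian_neg (φ : E → ℝ) (z : E) :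
    infLaplacian (fun y => -φ y) z = -infLaplacian φ z := by
  have hgrad : gradient (fun y => -φ y) = fun y => -gradient φ y := by
    ext1 y; simp [gradient]
  simp [infLaplacian, hgrad]

end

theorem hasDerivAt_abs_rpow_mul_self (q : ℝ) {x : ℝ} (hx : x ≠ 0) :
    HasDerivAt (fun y => |y| ^ q * y) ((q + 1) * |x| ^ q) x := by
  have habs : |x| ≠ 0 := abs_ne_zero.mpr hx
  refine (((hasDerivAt_abs hx).rpow_const (Or.inl habs)).mul (hasDerivAt_id x)).congr_deriv ?_
  rw [Real.rpow_sub_one habs, id, mul_comm _ x, ← mul_assoc, ← mul_assoc, self_mul_sign]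
  field_simp

theorem hasDerivAt_abs_rpow_four_thirds_line (x w t : ℝ) :
    HasDerivAt (fun s => |x + s * w| ^ (4/3 : ℝ))
      (4/3 * (|x + t * w| ^ (-2/3 : ℝ) * (x + t * w)) * w) t := by
  have hline : HasDerivAt (fun s => x + s * w) w t := by
    simpa using ((hasDerivAt_id t).mul_const w).const_add x
  refine ((hasDerivAt_abs_rpow (x + t * w) (p := 4/3) (by norm_num)).comp t hline).congr_deriv ?_
  norm_num [mul_assoc]

theorem hasDerivAt_deriv_abs_rpow_four_thirds_line {x w : ℝ} (hxw : x = 0 → w = 0) :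
    HasDerivAt (fun t => 4/3 * (|x + t * w| ^ (-2/3 : ℝ) * (x + t * w)) * w)
      (4/9 * |x| ^ (-2/3 : ℝ) * w ^ 2) 0 := by
  by_cases hx : x = 0
  · simp [hxw hx, hasDerivAt_const]
  have hline : HasDerivAt (fun t => x + t * w) w 0 := by
    simpa using ((hasDerivAt_id (0 : ℝ)).mul_const w).const_add x
  have hcomp := ((show HasDerivAt (fun y => |y| ^ (-2/3 : ℝ) * y)
    ((-2/3 + 1) * |x| ^ (-2/3 : ℝ)) (x + 0 * w) by
      simpa using hasDerivAt_abs_rpow_mul_self (-2/3) hx).comp 0 hline).const_mul (4/3)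
    |>.mul_const w
  exact hcomp.congr_deriv (by ring)

theorem secondDeriv_mul_deriv_sq_abs_rpow_four_thirds {x : ℝ} (hx : x ≠ 0) :
    4/9 * |x| ^ (-2/3 : ℝ) * (4/3 * (|x| ^ (-2/3 : ℝ) * x)) ^ 2 = 64/81 := by
  have habs : 0 < |x| := abs_pos.mpr hx
  have hcube : (|x| ^ (-2/3 : ℝ)) ^ 3 * x ^ 2 = 1 := by
    rw [← Real.rpow_natCast, ← Real.rpow_mul habs.le, ← sq_abs, ← Real.rpow_two,
      ← Real.rpow_add habs]
    norm_num
  linear_combination (64/81 : ℝ) * hcube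

theorem secondDeriv_mul_deriv_sq_abs_rpow_four_thirds_le (x : ℝ) :
    4/9 * |x| ^ (-2/3 : ℝ) * (4/3 * (|x| ^ (-2/3 : ℝ) * x)) ^ 2 ≤ 64/81 := by
  rcases eq_or_ne x 0 with rfl | hx
  · norm_num
  · exact (secondDeriv_mul_deriv_sq_abs_rpow_four_thirds hx).le

section

variable {ι : Type*} [Fintype ι] [DecidableEq ι] {i j : ι} {φ : EuclideanSpace ℝ ι → ℝ}
  {z₀ : EuclideanSpace ℝ ι}

theorem coord_ne_zero_of_isLocalMax (hij : i ≠ j) (hφ : ContDiff ℝ 2 φ)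
    (hmax : IsLocalMax (fun z => |z i| ^ (4/3 : ℝ) - |z j| ^ (4/3 : ℝ) - φ z) z₀) :
    z₀ i ≠ 0 := by
  intro hx
  set e : EuclideanSpace ℝ ι := EuclideanSpace.single i 1
  refine not_eventually_abs_rpow_le_sub (p := 4/3) (by norm_num)
    (Eventually.of_forall fun t => hasDerivAt_comp_add_smul (hφ.differentiable (by norm_num) _))
    (hasDerivAt_inner_gradient_comp_add_smul (v := e) (hφ.differentiable_gradient z₀)) ?_
  filter_upwards [hmax.comp_add_smul e] with t ht
  simp only [e, PiLp.add_apply, PiLp.smul_apply, smul_eq_mul, PiLp.single_eq_same,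
    PiLp.single_eq_of_ne (p := 2) hij.symm, hx, mul_one, mul_zero, zero_add, add_zero, zero_smul,
    abs_zero, Real.zero_rpow (show (4/3 : ℝ) ≠ 0 by norm_num)] at ht ⊢
  linarith

theorem infLaplacian_nonneg_of_isLocalMax (hij : i ≠ j) (hφ : ContDiff ℝ 2 φ)
    (hmax : IsLocalMax (fun z => |z i| ^ (4/3 : ℝ) - |z j| ^ (4/3 : ℝ) - φ z) z₀) :
    0 ≤ infLaplacian φ z₀ := by
  have hu : ∀ v : EuclideanSpace ℝ ι, ∀ t : ℝ,
      HasDerivAt (fun s : ℝ => |(z₀ + s • v) i| ^ (4/3 : ℝ) - |(z₀ + s • v) j| ^ (4/3 : ℝ))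
        (4/3 * (|z₀ i + t * v i| ^ (-2/3 : ℝ) * (z₀ i + t * v i)) * v i
          - 4/3 * (|z₀ j + t * v j| ^ (-2/3 : ℝ) * (z₀ j + t * v j)) * v j) t := fun v t =>
    (hasDerivAt_abs_rpow_four_thirds_line (z₀ i) (v i) t).sub
      (hasDerivAt_abs_rpow_four_thirds_line (z₀ j) (v j) t)
  have hx := coord_ne_zero_of_isLocalMax hij hφ hmax
  have hφd : Differentiable ℝ φ := hφ.differentiable (by norm_num)
  set g := gradient φ z₀
  have hgi : g i = 4/3 * (|z₀ i| ^ (-2/3 : ℝ) * z₀ i) := by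
    have := hmax.eq_inner_gradient (hφd z₀) (hu (EuclideanSpace.single i 1) 0)
    rw [EuclideanSpace.inner_single_right] at this
    simpa [hij.symm] using this.symm
  have hgj : g j = -(4/3 * (|z₀ j| ^ (-2/3 : ℝ) * z₀ j)) := by
    have := hmax.eq_inner_gradient (hφd z₀) (hu (EuclideanSpace.single j 1) 0)
    rw [EuclideanSpace.inner_single_right] at this
    simpa [hij] using this.symm
  have key := hmax.le_inner_fderiv_gradient hφ (Eventually.of_forall (hu g))
    ((hasDerivAt_deriv_abs_rpow_four_thirds_line fun h => absurd h hx).sub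
      (hasDerivAt_deriv_abs_rpow_four_thirds_line fun h => by simp [hgj, h]))
  refine le_trans ?_ key
  rw [hgi, hgj, neg_sq, secondDeriv_mul_deriv_sq_abs_rpow_four_thirds hx]
  linarith [secondDeriv_mul_deriv_sq_abs_rpow_four_thirds_le (z₀ j)]

end

theorem stmt_17
    (u : EuclideanSpace ℝ (Fin 2) → ℝ)
    (hu : ∀ z : EuclideanSpace ℝ (Fin 2),
      u z = |z 0| ^ ((4:ℝ)/3) - |z 1| ^ ((4:ℝ)/3)) :
    (∀ φ : EuclideanSpace ℝ (Fin 2) → ℝ, ContDiff ℝ 2 φ →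
      ∀ z₀ : EuclideanSpace ℝ (Fin 2), IsLocalMax (fun z => u z - φ z) z₀ →
        -⟪fderiv ℝ (gradient φ) z₀ (gradient φ z₀), gradient φ z₀⟫ ≤ 0) ∧
    (∀ φ : EuclideanSpace ℝ (Fin 2) → ℝ, ContDiff ℝ 2 φ →
      ∀ z₀ : EuclideanSpace ℝ (Fin 2), IsLocalMin (fun z => u z - φ z) z₀ →
        0 ≤ -⟪fderiv ℝ (gradient φ) z₀ (gradient φ z₀), gradient φ z₀⟫) := by
  obtain rfl : u = fun z => |z 0| ^ (4/3 : ℝ) - |z 1| ^ (4/3 : ℝ) := funext hu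
  refine ⟨fun φ hφ z₀ hmax =>
    neg_nonpos.mpr (infLaplacian_nonneg_of_isLocalMax zero_ne_one hφ hmax), fun φ hφ z₀ hmin => ?_⟩
  have hmax : IsLocalMax (fun z => |z 1| ^ (4/3 : ℝ) - |z 0| ^ (4/3 : ℝ) - -φ z) z₀ := by
    filter_upwards [hmin] with z hz
    linarith
  have := infLaplacian_nonneg_of_isLocalMax one_ne_zero hφ.neg hmax
  rwa [infLaplacian_neg] at this
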